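/- arXiv:1802.07407 — 4 statements merged into one kernel-verified Lean document; each statement's English description precedes it below -/
import Mathlib

section
/- Let n ≥ 2 and let I_1, ..., I_n be i.i.d. random variables with the equal revenue distribution. Then P[(1/n) · Σ_{i=1}^n I_i ≥ (log n)/2] ≥ 1/2. -/
/-!
Truncate at `n`: put `Y_i = min I_i n`. For the equal revenue law, which is Mathlib's
`paretoMeasure 1 1` (density `x⁻²` on `[1, ∞)`), `E Y_i = log n + 1` and `E Y_i² = 2n - 1`.
Since `Y_i ≤ I_i`, the event `∑ I_i < n log n / 2` forces `∑ Y_i` to fall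
`n (1 + log n / 2)` below its mean, so by Chebyshev's inequality for pairwise independent
summands its probability is at most `2n² / (n (1 + log n / 2))² ≤ 1/2` as soon as `log n ≥ 2`.
For `log n ≤ 2` there is nothing to prove, as every `I_i ≥ 1` makes the average at least `1`.
-/

open MeasureTheory ProbabilityTheory Set Real

namespace ProbabilityTheory

variable {Ω ι : Type*} [MeasurableSpace Ω] {μ : Measure Ω}

instance : IsProbabilityMeasure (paretoMeasure 1 1) :=
  isProbabilityMeasure_paretoMeasure one_pos one_pos

lemma paretoMeasure_one_one_Iio_one : paretoMeasure 1 1 (Iio 1) = 0 := by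
  rw [paretoMeasure, withDensity_apply _ measurableSet_Iio, lintegral_paretoPDF_of_le le_rfl]

lemma ae_one_le_paretoMeasure_one_one : ∀ᵐ x ∂paretoMeasure 1 1, 1 ≤ x := by
  rw [ae_iff]
  simp only [not_le]
  exact paretoMeasure_one_one_Iio_one

lemma paretoMeasure_one_one_Ioi {x : ℝ} (hx : 1 ≤ x) :
    paretoMeasure 1 1 (Ioi x) = ENNReal.ofReal x⁻¹ := by
  have hx0 : 0 < x := one_pos.trans_le hx
  rw [paretoMeasure, withDensity_apply _ measurableSet_Ioi,
    setLIntegral_congr_fun measurableSet_Ioi (g := fun t => ENNReal.ofReal (t ^ (-2 : ℝ)))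
      fun t ht => by norm_num [paretoPDF, paretoPDFReal, hx.trans ht.le],
    ← ofReal_integral_eq_lintegral_ofReal (integrableOn_Ioi_rpow_of_lt (by norm_num) hx0)
      ((ae_restrict_iff' measurableSet_Ioi).2
        (ae_of_all _ fun t ht => rpow_nonneg (hx0.trans ht).le _)),
    integral_Ioi_rpow_of_lt (by norm_num) hx0]
  norm_num [rpow_neg_one]

lemma paretoMeasure_one_one_Iic {x : ℝ} (hx : 1 ≤ x) :
    paretoMeasure 1 1 (Iic x) = ENNReal.ofReal (1 - x⁻¹) := by
  rw [← compl_Ioi, prob_compl_eq_one_sub measurableSet_Ioi, paretoMeasure_one_one_Ioi hx,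
    ENNReal.ofReal_sub _ (inv_nonneg.2 (zero_le_one.trans hx)), ENNReal.ofReal_one]

lemma hasLaw_paretoMeasure_one_one [IsProbabilityMeasure μ] {X : Ω → ℝ} (hX : Measurable X)
    (hsupp : ∀ᵐ ω ∂μ, 1 ≤ X ω)
    (hcdf : ∀ x, 1 ≤ x → μ.real {ω | X ω ≤ x} = 1 - 1 / x) :
    HasLaw X (paretoMeasure 1 1) μ := by
  refine ⟨hX.aemeasurable, Measure.ext_of_Iic _ _ fun x => ?_⟩
  rw [Measure.map_apply hX measurableSet_Iic]
  rcases le_or_gt 1 x with hx | hx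
  · rw [paretoMeasure_one_one_Iic hx, ← one_div, ← hcdf x hx, ofReal_measureReal]
    rfl
  · refine (measure_mono_null (fun ω hω => ?_) (ae_iff.1 hsupp)).trans
      (measure_mono_null (Iic_subset_Iio.2 hx) paretoMeasure_one_one_Iio_one).symm
    simpa using (show X ω ≤ x from hω).trans_lt hx

lemma integral_paretoMeasure_one_one (f : ℝ → ℝ) :
    ∫ x, f x ∂paretoMeasure 1 1 = ∫ x in Ioi 1, x ^ (-2 : ℝ) * f x := by
  rw [paretoMeasure, integral_withDensity_eq_integral_toReal_smul
    (f := paretoPDF 1 1) (measurable_paretoPDFReal 1 1).ennreal_ofReal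
    (ae_of_all _ fun _ => ENNReal.ofReal_lt_top), ← integral_Ici_eq_integral_Ioi,
    ← integral_indicator measurableSet_Ici]
  congr 1 with x
  by_cases hx : 1 ≤ x
  · norm_num [paretoPDF, paretoPDFReal, hx, sq_nonneg]
  · simp [paretoPDF, paretoPDFReal, hx]

lemma integral_paretoMeasure_one_one_comp_min {h : ℝ → ℝ} {m : ℝ} (hm : 1 ≤ m)
    (hh : ContinuousOn h (Icc 1 m)) :
    ∫ x, h (min x m) ∂paretoMeasure 1 1 = (∫ x in 1..m, x ^ (-2 : ℝ) * h x) + h m / m := by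
  have hm0 : 0 < m := one_pos.trans_le hm
  have hcont : ContinuousOn (fun x : ℝ => x ^ (-2 : ℝ) * h x) (Icc 1 m) :=
    (continuousOn_id.rpow_const fun x hx => Or.inl (one_pos.trans_le hx.1).ne').mul hh
  rw [integral_paretoMeasure_one_one, ← Ioc_union_Ioi_eq_Ioi hm,
    setIntegral_union Ioc_disjoint_Ioi_same measurableSet_Ioi
      ((hcont.congr fun x hx => by rw [min_eq_left hx.2]).integrableOn_Icc.mono_set
        Ioc_subset_Icc_self)
      (IntegrableOn.congr_fun
        ((integrableOn_Ioi_rpow_of_lt (by norm_num : (-2 : ℝ) < -1) hm0).mul_const (h m))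
        (fun x hx => by rw [min_eq_right hx.le]) measurableSet_Ioi),
    intervalIntegral.integral_of_le hm,
    setIntegral_congr_fun measurableSet_Ioc fun x hx => by rw [min_eq_left hx.2],
    setIntegral_congr_fun measurableSet_Ioi fun x hx => by rw [min_eq_right hx.le],
    integral_mul_const, integral_Ioi_rpow_of_lt (by norm_num) hm0]
  norm_num [rpow_neg_one, div_eq_inv_mul]

lemma integral_min_paretoMeasure_one_one {m : ℝ} (hm : 1 ≤ m) :
    ∫ x, min x m ∂paretoMeasure 1 1 = log m + 1 := by
  have hm0 : 0 < m := one_pos.trans_le hm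
  rw [integral_paretoMeasure_one_one_comp_min (h := fun x => x) hm continuousOn_id,
    intervalIntegral.integral_congr (g := fun x => x⁻¹) fun x hx => ?_,
    integral_inv_of_pos one_pos hm0, div_one, div_self hm0.ne']
  have hx0 : x ≠ 0 := (one_pos.trans_le (uIcc_of_le hm ▸ hx).1).ne'
  simp only [rpow_neg_ofNat, Int.reduceNeg, zpow_neg, zpow_ofNat]
  field_simp

lemma integral_min_sq_paretoMeasure_one_one {m : ℝ} (hm : 1 ≤ m) :
    ∫ x, min x m ^ 2 ∂paretoMeasure 1 1 = 2 * m - 1 := by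
  have hm0 : 0 < m := one_pos.trans_le hm
  rw [integral_paretoMeasure_one_one_comp_min (h := fun x => x ^ 2) hm (continuousOn_pow 2),
    intervalIntegral.integral_congr (g := fun _ => 1) fun x hx => ?_,
    intervalIntegral.integral_const, smul_eq_mul, mul_one]
  · field_simp
    ring
  · have hx0 : x ≠ 0 := (one_pos.trans_le (uIcc_of_le hm ▸ hx).1).ne'
    simp only [rpow_neg_ofNat, Int.reduceNeg, zpow_neg, zpow_ofNat]
    field_simp

lemma measure_sum_le_sum_integral_sub_le [IsFiniteMeasure μ] {s : Finset ι}
    {Y : ι → Ω → ℝ} (hY : ∀ i ∈ s, MemLp (Y i) 2 μ)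
    (hindep : Set.Pairwise s fun i j => Y i ⟂ᵢ[μ] Y j) {c : ℝ} (hc : 0 < c) :
    μ {ω | ∑ i ∈ s, Y i ω ≤ ∑ i ∈ s, μ[Y i] - c} ≤
      ENNReal.ofReal ((∑ i ∈ s, variance (Y i) μ) / c ^ 2) := by
  rw [← IndepFun.variance_sum hY hindep]
  refine (measure_mono fun ω hω => ?_).trans
    (meas_ge_le_variance_div_sq (memLp_finsetSum' s hY) hc)
  have hω : ∑ i ∈ s, Y i ω ≤ ∑ i ∈ s, μ[Y i] - c := hω
  simp only [mem_ofPred_eq, Finset.sum_apply]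
  rw [integral_finsetSum s fun i hi => (hY i hi).integrable one_le_two]
  exact le_abs.2 (Or.inr (by linarith))

lemma measure_sum_lt_card_mul_eq_zero {s : Finset ι} {X : ι → Ω → ℝ}
    (hX : ∀ i ∈ s, ∀ᵐ ω ∂μ, 1 ≤ X i ω) {t : ℝ} (ht : t ≤ 1) :
    μ {ω | ∑ i ∈ s, X i ω < s.card * t} = 0 := by
  refine measure_mono_null (fun ω hω => ?_) (ae_iff.1 ((ae_ball_iff s.countable_toSet).2 hX))
  have hω : ∑ i ∈ s, X i ω < s.card * t := hω
  refine fun hone => hω.not_ge ?_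
  calc (s.card : ℝ) * t ≤ s.card := mul_le_of_le_one_right (Nat.cast_nonneg _) ht
    _ ≤ ∑ i ∈ s, X i ω := by simpa using Finset.card_nsmul_le_sum s (X · ω) 1 hone

lemma HasLaw.integral_min_of_pareto {X : Ω → ℝ} (hX : HasLaw X (paretoMeasure 1 1) μ)
    {m : ℝ} (hm : 1 ≤ m) : μ[fun ω => min (X ω) m] = log m + 1 := by
  rw [← integral_min_paretoMeasure_one_one hm]
  exact hX.integral_comp (f := fun x => min x m) (by fun_prop)

lemma HasLaw.variance_min_le_of_pareto [IsProbabilityMeasure μ] {X : Ω → ℝ}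
    (hX : HasLaw X (paretoMeasure 1 1) μ) {m : ℝ} (hm : 1 ≤ m) :
    variance (fun ω => min (X ω) m) μ ≤ 2 * m := by
  calc variance (fun ω => min (X ω) m) μ ≤ μ[fun ω => min (X ω) m ^ 2] :=
        variance_le_expectation_sq (hX.aemeasurable.min aemeasurable_const).aestronglyMeasurable
    _ = 2 * m - 1 := by
        rw [← integral_min_sq_paretoMeasure_one_one hm]
        exact hX.integral_comp (f := fun x => min x m ^ 2) (by fun_prop)
    _ ≤ 2 * m := by linarith

lemma HasLaw.memLp_min_of_pareto [IsFiniteMeasure μ] {X : Ω → ℝ}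
    (hX : HasLaw X (paretoMeasure 1 1) μ) {m : ℝ} (hm : 1 ≤ m) :
    MemLp (fun ω => min (X ω) m) 2 μ := by
  refine MemLp.of_bound (hX.aemeasurable.min aemeasurable_const).aestronglyMeasurable m ?_
  filter_upwards [ae_of_ae_map hX.aemeasurable (hX.map_eq ▸ ae_one_le_paretoMeasure_one_one)]
    with ω hω
  rw [norm_of_nonneg (zero_le_one.trans (le_min hω hm))]
  exact min_le_right _ _

lemma measure_sum_lt_le_half_of_hasLaw_pareto [IsProbabilityMeasure μ] {n : ℕ}
    {I : Fin n → Ω → ℝ} (hindep : iIndepFun I μ)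
    (hlaw : ∀ i, HasLaw (I i) (paretoMeasure 1 1) μ) (hlog : 2 ≤ log n) :
    μ {ω | ∑ i, I i ω < n * (log n / 2)} ≤ ENNReal.ofReal (1 / 2) := by
  set m : ℝ := (n : ℝ)
  set L := log m
  have hm : 1 ≤ m := ((log_pos_iff (Nat.cast_nonneg n)).1 (by linarith)).le
  set Y : Fin n → Ω → ℝ := fun i ω => min (I i ω) m
  have hindepY : Set.Pairwise (Finset.univ : Finset (Fin n)) fun i j => Y i ⟂ᵢ[μ] Y j :=
    fun i _ j _ hij => (hindep.indepFun hij).comp (φ := fun x => min x m) (ψ := fun x => min x m)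
      (by fun_prop) (by fun_prop)
  have hc : 0 < m * (1 + L / 2) := by positivity
  calc μ {ω | ∑ i, I i ω < m * (L / 2)}
      ≤ μ {ω | ∑ i, Y i ω ≤ ∑ i, μ[Y i] - m * (1 + L / 2)} := by
        refine measure_mono fun ω hω => ?_
        have hω : ∑ i, I i ω < m * (L / 2) := hω
        have hYI : ∑ i, Y i ω ≤ ∑ i, I i ω := Finset.sum_le_sum fun i _ => min_le_left _ _
        simp only [mem_ofPred_eq, Y, fun i => (hlaw i).integral_min_of_pareto hm,
          Finset.sum_const, Finset.card_univ, Fintype.card_fin, nsmul_eq_mul]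
        linarith
    _ ≤ ENNReal.ofReal ((∑ i, variance (Y i) μ) / (m * (1 + L / 2)) ^ 2) :=
        measure_sum_le_sum_integral_sub_le (fun i _ => (hlaw i).memLp_min_of_pareto hm) hindepY hc
    _ ≤ ENNReal.ofReal (1 / 2) := by
        refine ENNReal.ofReal_le_ofReal ((div_le_iff₀ (by positivity)).2 ?_)
        have hsum : ∑ i, variance (Y i) μ ≤ m * (2 * m) := by
          simpa using Finset.sum_le_sum fun i (_ : i ∈ Finset.univ) =>
            (hlaw i).variance_min_le_of_pareto hm
        have hfour : 4 ≤ (1 + L / 2) ^ 2 := by nlinarith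
        nlinarith [sq_nonneg m]

end ProbabilityTheory

open ProbabilityTheory in
/-- Lemma 1 (first part): for `n ≥ 2` i.i.d. equal-revenue random variables `I_1, …, I_n`,
`P[(1/n) Σ I_i ≥ (log n)/2] ≥ 1/2`. -/
theorem er_average_lower_tail
    {Ω : Type*} [MeasurableSpace Ω] (μ : Measure Ω) [IsProbabilityMeasure μ]
    (n : ℕ) (hn : 2 ≤ n) (I : Fin n → Ω → ℝ)
    (hmeas : ∀ i, Measurable (I i))
    (hindep : ProbabilityTheory.iIndepFun I μ)
    (hsupp : ∀ i, ∀ᵐ ω ∂μ, 1 ≤ I i ω)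
    (hcdf : ∀ i, ∀ x : ℝ, 1 ≤ x → (μ {ω | I i ω ≤ x}).toReal = 1 - 1 / x) :
    (1 : ℝ) / 2 ≤ (μ {ω | Real.log n / 2 ≤ (1 / (n : ℝ)) * ∑ i, I i ω}).toReal := by
  set A := {ω | log n / 2 ≤ 1 / (n : ℝ) * ∑ i, I i ω}
  have hA : MeasurableSet A := measurableSet_le measurable_const (by fun_prop)
  have hAc : Aᶜ = {ω | ∑ i, I i ω < n * (log n / 2)} := by
    ext ω
    simp only [A, mem_compl_iff, mem_ofPred_eq, not_le, one_div,
      inv_mul_lt_iff₀ (by positivity : (0 : ℝ) < n)]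
  have hAc_le : μ Aᶜ ≤ ENNReal.ofReal (1 / 2) := by
    rw [hAc]
    rcases le_or_gt (log n) 2 with hlog | hlog
    · have h := measure_sum_lt_card_mul_eq_zero (μ := μ) (s := Finset.univ)
        (fun i _ => hsupp i) (by linarith : log n / 2 ≤ 1)
      rw [Finset.card_univ, Fintype.card_fin] at h
      exact h.le.trans zero_le
    · exact measure_sum_lt_le_half_of_hasLaw_pareto hindep
        (fun i => hasLaw_paretoMeasure_one_one (hmeas i) (hsupp i) (hcdf i)) hlog.le
  have hcompl := probReal_compl_eq_one_sub (μ := μ) hA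
  have hAc_real : μ.real Aᶜ ≤ 1 / 2 := ENNReal.toReal_le_of_le_ofReal (by norm_num) hAc_le
  change 1 / 2 ≤ μ.real A
  linarith
end

section
/- Let n ≥ 2 and let I_1, ..., I_n be i.i.d. random variables with the equal revenue distribution. Then for any P ≥ 6 log n, P[(1/n) · Σ_{i=1}^n I_i ≥ P] ≤ 9/P. -/
/-!
Truncate every `I i` at `T = n P / 2`. Some `I i` exceeds `T` with probability at most
`n / T = 2 / P`. Otherwise the sum equals the sum of the independent truncations `min (I i) T`,
whose means are at most `1 + log T ≤ 3 P / 5` and whose second moments are at most `2 T`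
(both by the layer-cake formula and the tail `P[I ≥ t] ≤ 1 / t`). Chebyshev's inequality with
margin `2 n P / 5` bounds the remaining probability by `25 / (4 P)`, and
`2 / P + 25 / (4 P) ≤ 9 / P`.
-/

open scoped ENNReal

open MeasureTheory ProbabilityTheory Set Filter Topology

lemma setOf_le_sum_subset {Ω ι : Type*} [Fintype ι] (I : ι → Ω → ℝ) (a T : ℝ) :
    {ω | a ≤ ∑ i, I i ω} ⊆ (⋃ i, {ω | T < I i ω}) ∪ {ω | a ≤ ∑ i, min (I i ω) T} := by
  intro ω (hω : a ≤ ∑ i, I i ω)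
  by_cases h : ∃ i, T < I i ω
  · exact Or.inl (mem_iUnion.2 h)
  · simp only [not_exists, not_lt] at h
    exact Or.inr (show a ≤ ∑ i, min (I i ω) T by simpa [min_eq_left (h _)] using hω)

lemma measureReal_ge_le_variance_div_sq {Ω : Type*} [MeasurableSpace Ω] {μ : Measure Ω}
    [IsFiniteMeasure μ] {S : Ω → ℝ} (hS : MemLp S 2 μ) {a c : ℝ} (hc : 0 < c) (ha : μ[S] + c ≤ a) :
    μ.real {ω | a ≤ S ω} ≤ variance S μ / c ^ 2 := by
  refine (measureReal_mono fun ω (hω : a ≤ S ω) => ?_).trans <|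
    ENNReal.toReal_le_of_le_ofReal (div_nonneg (variance_nonneg _ _) (sq_nonneg _))
      (meas_ge_le_variance_div_sq hS hc)
  exact show c ≤ |S ω - μ[S]| from (by linarith : c ≤ S ω - μ[S]).trans (le_abs_self _)

section Truncation

variable {Ω : Type*} [MeasurableSpace Ω] {μ : Measure Ω} [IsProbabilityMeasure μ] {X : Ω → ℝ}

lemma measureReal_gt_eq_inv_of_cdf (hX : Measurable X) {x : ℝ}
    (hcdf : μ.real {ω | X ω ≤ x} = 1 - 1 / x) : μ.real {ω | x < X ω} = 1 / x := by
  have hcompl : {ω | x < X ω} = {ω | X ω ≤ x}ᶜ := by ext; simp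
  rw [hcompl, measureReal_compl (measurableSet_le hX measurable_const), probReal_univ, hcdf]
  ring

lemma measureReal_ge_le_inv_of_cdf (hX : Measurable X)
    (hcdf : ∀ x, 1 ≤ x → μ.real {ω | X ω ≤ x} = 1 - 1 / x) {x : ℝ} (hx : 1 < x) :
    μ.real {ω | x ≤ X ω} ≤ 1 / x := by
  have hle : ∀ s ∈ Ioo 1 x, μ.real {ω | x ≤ X ω} ≤ 1 / s := fun s hs =>
    measureReal_gt_eq_inv_of_cdf hX (hcdf s hs.1.le) ▸
      measureReal_mono fun ω hω => hs.2.trans_le hω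
  have hlim : Tendsto (fun s : ℝ => 1 / s) (𝓝[<] x) (𝓝 (1 / x)) :=
    ((continuousAt_const.div continuousAt_id (by positivity)).tendsto).mono_left
      nhdsWithin_le_nhds
  exact ge_of_tendsto hlim (eventually_of_mem (Ioo_mem_nhdsLT hx) hle)

lemma integral_le_one_add_setIntegral_of_measureReal_le {f : Ω → ℝ} {M : ℝ} {g : ℝ → ℝ}
    (hf : Integrable f μ) (hf0 : 0 ≤ᵐ[μ] f) (hfM : f ≤ᵐ[μ] fun _ => M) (hM : 1 ≤ M)
    (hg : IntegrableOn g (Ioc 1 M)) (hfg : ∀ t ∈ Ioc 1 M, μ.real {ω | t ≤ f ω} ≤ g t) :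
    ∫ ω, f ω ∂μ ≤ 1 + ∫ t in Ioc 1 M, g t := by
  have hanti : Antitone fun t => μ.real {ω | t ≤ f ω} := fun s t hst =>
    measureReal_mono fun ω hω => hst.trans hω
  have hint : ∀ a b, IntegrableOn (fun t => μ.real {ω | t ≤ f ω}) (Ioc a b) := fun a b =>
    (hanti.locallyIntegrable.integrableOn_isCompact isCompact_Icc).mono_set Ioc_subset_Icc_self
  have hfirst : ∫ t in Ioc (0 : ℝ) 1, μ.real {ω | t ≤ f ω} ≤ 1 :=
    (setIntegral_mono_on (hint 0 1) (integrableOn_const measure_Ioc_lt_top.ne) measurableSet_Ioc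
      fun _ _ => measureReal_le_one).trans (by simp)
  rw [hf.integral_eq_integral_Ioc_meas_le hf0 hfM, ← Ioc_union_Ioc_eq_Ioc zero_le_one hM,
    setIntegral_union (Ioc_disjoint_Ioc_of_le le_rfl) measurableSet_Ioc (hint 0 1) (hint 1 M)]
  exact add_le_add hfirst (setIntegral_mono_on (hint 1 M) hg measurableSet_Ioc hfg)

variable {T : ℝ}

lemma memLp_min_const (hX : Measurable X) (hX0 : 0 ≤ᵐ[μ] X) (hT : 0 ≤ T) (p : ℝ≥0∞) :
    MemLp (fun ω => min (X ω) T) p μ := by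
  refine MemLp.of_bound (hX.min measurable_const).aestronglyMeasurable T ?_
  filter_upwards [hX0] with ω hω
  rw [Real.norm_of_nonneg (le_min hω hT)]
  exact min_le_right _ _

lemma integral_min_le_one_add_log (hX : Measurable X) (hX0 : 0 ≤ᵐ[μ] X)
    (htail : ∀ t, 1 < t → μ.real {ω | t ≤ X ω} ≤ 1 / t) (hT : 1 ≤ T) :
    ∫ ω, min (X ω) T ∂μ ≤ 1 + Real.log T := by
  have hinv : IntegrableOn (fun t : ℝ => 1 / t) (Ioc 1 T) :=
    (ContinuousOn.integrableOn_Icc (continuousOn_const.div continuousOn_id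
      fun t ht => (zero_lt_one.trans_le ht.1).ne')).mono_set Ioc_subset_Icc_self
  have hlog : ∫ t in Ioc 1 T, 1 / t = Real.log T := by
    rw [← intervalIntegral.integral_of_le hT, integral_one_div, div_one]
    exact fun h => by linarith [(uIcc_of_le hT ▸ h).1]
  refine hlog ▸ integral_le_one_add_setIntegral_of_measureReal_le
    ((memLp_min_const hX hX0 (zero_le_one.trans hT) 1).integrable le_rfl) ?_
    (.of_forall fun ω => min_le_right _ _) hT hinv
    fun t ht => (measureReal_mono ?_).trans (htail t ht.1)
  · filter_upwards [hX0] with ω hω using le_min hω (zero_le_one.trans hT)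
  · exact fun ω (hω : t ≤ min (X ω) T) => show t ≤ X ω from hω.trans (min_le_left _ _)

lemma integral_min_sq_le (hX : Measurable X) (hX0 : 0 ≤ᵐ[μ] X)
    (htail : ∀ t, 1 < t → μ.real {ω | t ≤ X ω} ≤ 1 / t) (hT : 1 ≤ T) :
    ∫ ω, min (X ω) T ^ 2 ∂μ ≤ 2 * T := by
  have hT2 : 1 ≤ T ^ 2 := one_le_pow₀ hT
  have hrpow : IntegrableOn (fun t : ℝ => t ^ (-(1 / 2) : ℝ)) (Ioc 1 (T ^ 2)) :=
    (ContinuousOn.integrableOn_Icc fun t ht => (Real.continuousAt_rpow_const t _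
      (Or.inl (zero_lt_one.trans_le ht.1).ne')).continuousWithinAt).mono_set Ioc_subset_Icc_self
  have hval : ∫ t in Ioc 1 (T ^ 2), t ^ (-(1 / 2) : ℝ) = 2 * T - 2 := by
    rw [← intervalIntegral.integral_of_le hT2, integral_rpow (Or.inr ⟨by norm_num, fun h => by
      nlinarith [(uIcc_of_le hT2 ▸ h).1]⟩), show (-(1 / 2) : ℝ) + 1 = 1 / 2 by norm_num,
      Real.one_rpow, ← Real.sqrt_eq_rpow, Real.sqrt_sq (by linarith)]
    ring
  have hbound := integral_le_one_add_setIntegral_of_measureReal_le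
    (memLp_min_const hX hX0 (zero_le_one.trans hT) 2).integrable_sq
    (.of_forall fun ω => sq_nonneg _) ?_ hT2 hrpow fun t ht => ?_
  · linarith
  · filter_upwards [hX0] with ω hω
    exact pow_le_pow_left₀ (le_min hω (zero_le_one.trans hT)) (min_le_right _ _) 2
  · have ht0 : 0 < t := zero_lt_one.trans ht.1
    have hsub : {ω | t ≤ min (X ω) T ^ 2} ≤ᵐ[μ] {ω | √t ≤ X ω} := by
      filter_upwards [hX0] with ω hω (hωt : t ≤ min (X ω) T ^ 2)
      exact ((Real.sqrt_le_left (le_min hω (zero_le_one.trans hT))).2 hωt).trans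
        (min_le_left _ _)
    calc μ.real {ω | t ≤ min (X ω) T ^ 2} ≤ μ.real {ω | √t ≤ X ω} :=
          ENNReal.toReal_mono (measure_ne_top μ _) (measure_mono_ae hsub)
      _ ≤ 1 / √t := htail _ (Real.lt_sqrt zero_le_one |>.2 (by simpa using ht.1))
      _ = t ^ (-(1 / 2) : ℝ) := by rw [Real.rpow_neg ht0.le, ← Real.sqrt_eq_rpow, one_div]

end Truncation

section IndependentSum

variable {Ω ι : Type*} [MeasurableSpace Ω] {μ : Measure Ω} [IsProbabilityMeasure μ] [Fintype ι]
  {I : ι → Ω → ℝ} {T : ℝ}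

lemma integral_sum_min_le (hI : ∀ i, Measurable (I i)) (hI0 : ∀ i, 0 ≤ᵐ[μ] I i)
    (htail : ∀ i t, 1 < t → μ.real {ω | t ≤ I i ω} ≤ 1 / t) (hT : 1 ≤ T) :
    ∫ ω, ∑ i, min (I i ω) T ∂μ ≤ Fintype.card ι * (1 + Real.log T) := by
  rw [integral_finsetSum _ fun i _ =>
    (memLp_min_const (hI i) (hI0 i) (zero_le_one.trans hT) 1).integrable le_rfl]
  calc ∑ i, ∫ ω, min (I i ω) T ∂μ ≤ ∑ _i : ι, (1 + Real.log T) :=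
        Finset.sum_le_sum fun i _ => integral_min_le_one_add_log (hI i) (hI0 i) (htail i) hT
    _ = Fintype.card ι * (1 + Real.log T) := by simp [mul_add]

lemma variance_sum_min_le (hI : ∀ i, Measurable (I i)) (hI0 : ∀ i, 0 ≤ᵐ[μ] I i)
    (htail : ∀ i t, 1 < t → μ.real {ω | t ≤ I i ω} ≤ 1 / t) (hindep : iIndepFun I μ)
    (hT : 1 ≤ T) :
    variance (fun ω => ∑ i, min (I i ω) T) μ ≤ Fintype.card ι * (2 * T) := by
  have hL2 := fun i => memLp_min_const (hI i) (hI0 i) (zero_le_one.trans hT) 2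
  have hindep' : iIndepFun (fun i ω => min (I i ω) T) μ :=
    hindep.comp (fun _ x => min x T) fun _ => measurable_id.min measurable_const
  rw [← Finset.sum_fn, IndepFun.variance_sum (fun i _ => hL2 i)
    fun i _ j _ hij => hindep'.indepFun hij]
  calc ∑ i, variance (fun ω => min (I i ω) T) μ ≤ ∑ _i : ι, 2 * T :=
        Finset.sum_le_sum fun i _ => (variance_le_expectation_sq (hL2 i).1).trans
          (integral_min_sq_le (hI i) (hI0 i) (htail i) hT)
    _ = Fintype.card ι * (2 * T) := by simp

lemma measureReal_iUnion_gt_le (htail : ∀ i t, 1 < t → μ.real {ω | t ≤ I i ω} ≤ 1 / t)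
    (hT : 1 < T) : μ.real (⋃ i, {ω | T < I i ω}) ≤ Fintype.card ι / T := by
  calc μ.real (⋃ i, {ω | T < I i ω}) ≤ ∑ i, μ.real {ω | T < I i ω} :=
        measureReal_iUnion_fintype_le _
    _ ≤ ∑ _i : ι, 1 / T := Finset.sum_le_sum fun i _ =>
        (measureReal_mono fun ω (hω : T < I i ω) => show T ≤ I i ω from hω.le).trans
          (htail i T hT)
    _ = Fintype.card ι / T := by simp [div_eq_mul_inv]

lemma measureReal_sum_ge_le (hI : ∀ i, Measurable (I i)) (hI0 : ∀ i, 0 ≤ᵐ[μ] I i)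
    (htail : ∀ i t, 1 < t → μ.real {ω | t ≤ I i ω} ≤ 1 / t) (hindep : iIndepFun I μ)
    {a c : ℝ} (hT : 1 < T) (hc : 0 < c) (ha : Fintype.card ι * (1 + Real.log T) + c ≤ a) :
    μ.real {ω | a ≤ ∑ i, I i ω} ≤ Fintype.card ι / T + Fintype.card ι * (2 * T) / c ^ 2 := by
  have hL2 : MemLp (fun ω => ∑ i, min (I i ω) T) 2 μ :=
    memLp_finsetSum _ fun i _ => memLp_min_const (hI i) (hI0 i) (zero_le_one.trans hT.le) 2
  calc μ.real {ω | a ≤ ∑ i, I i ω}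
      ≤ μ.real (⋃ i, {ω | T < I i ω}) + μ.real {ω | a ≤ ∑ i, min (I i ω) T} :=
        (measureReal_mono (setOf_le_sum_subset I a T)).trans (measureReal_union_le _ _)
    _ ≤ Fintype.card ι / T + Fintype.card ι * (2 * T) / c ^ 2 := by
      refine add_le_add (measureReal_iUnion_gt_le htail hT) ?_
      refine (measureReal_ge_le_variance_div_sq hL2 hc ?_).trans ?_
      · linarith [integral_sum_min_le hI hI0 htail hT.le]
      · gcongr
        exact variance_sum_min_le hI hI0 htail hindep hT.le

end IndependentSum

lemma one_add_log_le_of_six_log_le {n P : ℝ} (hn : 0 < n) (hP : 6 * Real.log n ≤ P)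
    (hP9 : 9 < P) : 1 + Real.log (n * P / 2) ≤ 3 * P / 5 := by
  set u := √(P / 2)
  have hu : u ^ 2 = P / 2 := Real.sq_sqrt (by linarith)
  have hu2 : 2 ≤ u := Real.le_sqrt_of_sq_le (by linarith)
  have hlog : Real.log (P / 2) ≤ 2 * (u - 1) := by
    rw [← hu, Real.log_pow, Nat.cast_ofNat]
    linarith [Real.log_le_sub_one_of_pos (by linarith : 0 < u)]
  rw [mul_div_assoc, Real.log_mul hn.ne' (by linarith)]
  nlinarith

/-- Lemma 1 (second part): for `n ≥ 2` i.i.d. equal-revenue random variables `I_1, …, I_n`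
and any `P ≥ 6 log n`, `P[(1/n) Σ I_i ≥ P] ≤ 9/P`. -/
theorem er_average_upper_tail
    {Ω : Type*} [MeasurableSpace Ω] (μ : Measure Ω) [IsProbabilityMeasure μ]
    (n : ℕ) (hn : 2 ≤ n) (I : Fin n → Ω → ℝ)
    (hmeas : ∀ i, Measurable (I i))
    (hindep : ProbabilityTheory.iIndepFun I μ)
    (hsupp : ∀ i, ∀ᵐ ω ∂μ, 1 ≤ I i ω)
    (hcdf : ∀ i, ∀ x : ℝ, 1 ≤ x → (μ {ω | I i ω ≤ x}).toReal = 1 - 1 / x)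
    (P : ℝ) (hP : 6 * Real.log n ≤ P) :
    (μ {ω | P ≤ (1 / (n : ℝ)) * ∑ i, I i ω}).toReal ≤ 9 / P := by
  have hn1 : (1 : ℝ) < n := by exact_mod_cast hn
  have hn0 : (0 : ℝ) < n := zero_lt_one.trans hn1
  have hP0 : 0 < P := (mul_pos (by norm_num) (Real.log_pos hn1)).trans_le hP
  rcases le_or_gt P 9 with hP9 | hP9
  · exact measureReal_le_one.trans ((one_le_div hP0).2 hP9)
  have hevent : {ω | P ≤ (1 / (n : ℝ)) * ∑ i, I i ω} = {ω | n * P ≤ ∑ i, I i ω} := by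
    ext ω
    simp only [mem_ofPred_eq, one_div, ← div_eq_inv_mul, le_div_iff₀ hn0, mul_comm]
  have hbound := measureReal_sum_ge_le (a := n * P) (T := n * P / 2) (c := 2 * n * P / 5)
    hmeas (fun i => (hsupp i).mono fun _ h => zero_le_one.trans h)
    (fun i _ ht => measureReal_ge_le_inv_of_cdf (hmeas i) (hcdf i) ht) hindep
    (by nlinarith) (by positivity)
    (by rw [Fintype.card_fin]; nlinarith [one_add_log_le_of_six_log_le hn0 hP hP9])
  rw [Fintype.card_fin] at hbound
  calc μ.real {ω | P ≤ (1 / (n : ℝ)) * ∑ i, I i ω}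
      ≤ n / (n * P / 2) + n * (2 * (n * P / 2)) / (2 * n * P / 5) ^ 2 := hevent ▸ hbound
    _ = 33 / 4 / P := by field_simp; ring
    _ ≤ 9 / P := by gcongr; norm_num
end

section
/- Let m ≥ 2 and, for each k ∈ [m], let R_k denote the expected revenue (at the optimal posted price) from a bundle whose per-unit value is (1/m)Σ_{i=1}^m V_i/k with V_i i.i.d. ER. Then for any single bundle price P* ≥ 0, the total bundling revenue (1/m)·Σ_{k=1}^m P*·P[(1/m)Σ_i V_i ≥ kP*] is at most (1/m)·(9(1+log m) + 6 log m), i.e., O(log n/√n) for n = m². -/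
open MeasureTheory ProbabilityTheory Set

/-!
For `k P* ≤ 6 log m` the `k`-th term is at most `P*`, and there are at most `6 log m / P*`
such `k`. For the other `k` the tail bound `P[(1/m) Σ V_i ≥ t] ≤ 9 / t` at `t = k P*` bounds
the term by `9 / k`, and `Σ_k 9 / k ≤ 9 (1 + log m)`.

The tail bound: clipping every `V_i` to `[1, u]` with `u = m t` does not shrink the event
`Σ V_i ≥ u`, since a single `V_i > u` already clips to `u`. The clipped variables have mean at
most `1 + log u` and second moment at most `2 u` (layer cake against the tail `1 / s`), so
Markov's inequality gives the bound for `9 < t ≤ 12` and Chebyshev's for `t > 12`.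
-/

def clip (u x : ℝ) : ℝ := min (max x 1) u

section Clip

variable {u x : ℝ}

theorem one_le_clip (hu : 1 ≤ u) : 1 ≤ clip u x := le_min (le_max_right _ _) hu

theorem clip_le : clip u x ≤ u := min_le_right _ _

theorem measurable_clip : Measurable (clip u) :=
  (measurable_id.max measurable_const).min measurable_const

theorem lt_of_lt_clip {s : ℝ} (hs : 1 ≤ s) (h : s < clip u x) : s < x := by
  have := h.trans_le (min_le_left _ _)
  rw [lt_max_iff] at this
  exact this.resolve_right hs.not_gt

theorem le_sum_clip {ι : Type*} {s : Finset ι} {x : ι → ℝ} (hu : 1 ≤ u)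
    (h : u ≤ ∑ i ∈ s, x i) : u ≤ ∑ i ∈ s, clip u (x i) := by
  by_cases hbig : ∃ j ∈ s, u < x j
  · obtain ⟨j, hj, hxj⟩ := hbig
    calc u = clip u (x j) := (min_eq_right (hxj.le.trans (le_max_left _ _))).symm
      _ ≤ ∑ i ∈ s, clip u (x i) :=
        Finset.single_le_sum (fun i _ => zero_le_one.trans (one_le_clip hu)) hj
  · push Not at hbig
    refine h.trans (Finset.sum_le_sum fun i hi => ?_)
    rw [clip, min_eq_left (max_le (hbig i hi) hu)]
    exact le_max_left _ _

end Clip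

section LayerCake

variable {Ω : Type*} [MeasurableSpace Ω] {μ : Measure Ω} [IsProbabilityMeasure μ]

theorem integral_le_one_add_intervalIntegral_of_measureReal_lt_le {Y : Ω → ℝ} {b : ℝ}
    (hY : Measurable Y) (hY0 : ∀ ω, 0 ≤ Y ω) (hYb : ∀ ω, Y ω ≤ b) (hb : 1 ≤ b)
    {g : ℝ → ℝ} (hg : IntervalIntegrable g volume 1 b)
    (htail : ∀ s ∈ Icc 1 b, μ.real {ω | s < Y ω} ≤ g s) :
    ∫ ω, Y ω ∂μ ≤ 1 + ∫ s in 1..b, g s := by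
  set F : ℝ → ℝ := fun s => μ.real {ω | s < Y ω}
  have hF : Antitone F := fun s t hst => measureReal_mono fun ω (h : t < Y ω) => hst.trans_lt h
  have hYint : Integrable Y μ := by
    refine .of_bound hY.aestronglyMeasurable b (ae_of_all _ fun ω => ?_)
    rw [Real.norm_of_nonneg (hY0 ω)]
    exact hYb ω
  have hF_vanish : ∀ s ∈ Ioi (0 : ℝ) \ Ioc 0 b, F s = 0 := by
    rintro s ⟨hs0, hsb⟩
    have hbs : b < s := lt_of_not_ge fun h => hsb ⟨hs0, h⟩
    have hempty : {ω | s < Y ω} = ∅ :=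
      eq_empty_of_forall_notMem fun ω (h : s < Y ω) => (hYb ω).not_gt (hbs.trans h)
    simp [F, hempty]
  calc ∫ ω, Y ω ∂μ = ∫ s in Ioi 0, F s := hYint.integral_eq_integral_meas_lt (ae_of_all _ hY0)
    _ = ∫ s in 0..b, F s := by
      rw [intervalIntegral.integral_of_le (by linarith)]
      exact setIntegral_eq_of_subset_of_forall_sdiff_eq_zero measurableSet_Ioi
        Ioc_subset_Ioi_self hF_vanish
    _ = (∫ s in 0..1, F s) + ∫ s in 1..b, F s :=
      (intervalIntegral.integral_add_adjacent_intervals hF.intervalIntegrable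
        hF.intervalIntegrable).symm
    _ ≤ (∫ _ in 0..1, (1 : ℝ)) + ∫ s in 1..b, g s :=
      add_le_add
        (intervalIntegral.integral_mono_on zero_le_one hF.intervalIntegrable
          intervalIntegrable_const fun _ _ => measureReal_le_one)
        (intervalIntegral.integral_mono_on hb hF.intervalIntegrable hg htail)
    _ = 1 + ∫ s in 1..b, g s := by simp

end LayerCake

section EqualRevenue

variable {Ω : Type*} [MeasurableSpace Ω] {μ : Measure Ω} [IsProbabilityMeasure μ]
  {W : Ω → ℝ} {u : ℝ}

theorem measureReal_lt_eq_inv (hW : Measurable W)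
    (hcdf : ∀ x : ℝ, 1 ≤ x → (μ {ω | W ω ≤ x}).toReal = 1 - 1 / x) {s : ℝ} (hs : 1 ≤ s) :
    μ.real {ω | s < W ω} = s⁻¹ := by
  have hcompl : {ω | s < W ω} = {ω | W ω ≤ s}ᶜ := by ext ω; simp
  have hmeas : MeasurableSet {ω | W ω ≤ s} := hW measurableSet_Iic
  rw [hcompl, measureReal_compl hmeas, probReal_univ, measureReal_def, hcdf s hs]
  ring

theorem measureReal_lt_clip_le (hW : Measurable W)
    (hcdf : ∀ x : ℝ, 1 ≤ x → (μ {ω | W ω ≤ x}).toReal = 1 - 1 / x) {s : ℝ} (hs : 1 ≤ s) :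
    μ.real {ω | s < clip u (W ω)} ≤ s⁻¹ :=
  (measureReal_mono fun _ => lt_of_lt_clip hs).trans_eq (measureReal_lt_eq_inv hW hcdf hs)

theorem integral_clip_le (hW : Measurable W)
    (hcdf : ∀ x : ℝ, 1 ≤ x → (μ {ω | W ω ≤ x}).toReal = 1 - 1 / x) (hu : 1 ≤ u) :
    ∫ ω, clip u (W ω) ∂μ ≤ 1 + Real.log u := by
  have h0 : (0 : ℝ) ∉ uIcc 1 u := notMem_uIcc_of_lt zero_lt_one (by linarith)
  calc ∫ ω, clip u (W ω) ∂μ ≤ 1 + ∫ s in (1 : ℝ)..u, s⁻¹ :=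
        integral_le_one_add_intervalIntegral_of_measureReal_lt_le (measurable_clip.comp hW)
          (fun _ => zero_le_one.trans (one_le_clip hu)) (fun _ => clip_le) hu
          (intervalIntegrable_inv_iff.mpr (.inr h0))
          fun s hs => measureReal_lt_clip_le hW hcdf hs.1
    _ = 1 + Real.log u := by rw [integral_inv h0, div_one]

theorem integral_clip_sq_le (hW : Measurable W)
    (hcdf : ∀ x : ℝ, 1 ≤ x → (μ {ω | W ω ≤ x}).toReal = 1 - 1 / x) (hu : 1 ≤ u) :
    ∫ ω, clip u (W ω) ^ 2 ∂μ ≤ 2 * u := by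
  have hu2 : 1 ≤ u ^ 2 := one_le_pow₀ hu
  have hrpow : ∫ s in (1 : ℝ)..u ^ 2, s ^ (-(1 / 2) : ℝ) = 2 * u - 2 := by
    rw [integral_rpow (Or.inl (by norm_num)), Real.one_rpow,
      show (-(1 / 2) + 1 : ℝ) = 1 / 2 by norm_num, ← Real.sqrt_eq_rpow,
      Real.sqrt_sq (zero_le_one.trans hu)]
    ring
  have htail (s : ℝ) (hs : s ∈ Icc 1 (u ^ 2)) :
      μ.real {ω | s < clip u (W ω) ^ 2} ≤ s ^ (-(1 / 2) : ℝ) := by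
    have hsqrt : 1 ≤ √s := Real.one_le_sqrt.mpr hs.1
    calc μ.real {ω | s < clip u (W ω) ^ 2} ≤ μ.real {ω | √s < clip u (W ω)} :=
          measureReal_mono fun ω (h : s < _) =>
            (Real.sqrt_lt' (zero_lt_one.trans_le (one_le_clip hu))).mpr h
      _ ≤ (√s)⁻¹ := measureReal_lt_clip_le hW hcdf hsqrt
      _ = s ^ (-(1 / 2) : ℝ) := by
        rw [Real.sqrt_eq_rpow, Real.rpow_neg (zero_le_one.trans hs.1)]
  calc ∫ ω, clip u (W ω) ^ 2 ∂μ ≤ 1 + ∫ s in (1 : ℝ)..u ^ 2, s ^ (-(1 / 2) : ℝ) :=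
        integral_le_one_add_intervalIntegral_of_measureReal_lt_le
          ((measurable_clip.comp hW).pow_const 2) (fun _ => sq_nonneg _)
          (fun _ => pow_le_pow_left₀ (zero_le_one.trans (one_le_clip hu)) clip_le 2) hu2
          (intervalIntegral.intervalIntegrable_rpow' (by norm_num)) htail
    _ ≤ 2 * u := by rw [hrpow]; linarith

theorem memLp_clip (hW : Measurable W) (hu : 1 ≤ u) (p : ENNReal) :
    MemLp (fun ω => clip u (W ω)) p μ := by
  refine .of_bound (measurable_clip.comp hW).aestronglyMeasurable u (ae_of_all _ fun ω => ?_)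
  rw [Real.norm_of_nonneg (zero_le_one.trans (one_le_clip hu))]
  exact clip_le

end EqualRevenue

section SampleMean

variable {Ω : Type*} [MeasurableSpace Ω] {μ : Measure Ω} [IsProbabilityMeasure μ]
  {m : ℕ} {V : Fin m → Ω → ℝ} {u : ℝ}

theorem measureReal_ge_le_variance_div_sq_s6 {X : Ω → ℝ} (hX : MemLp X 2 μ) {a : ℝ}
    (ha : ∫ ω, X ω ∂μ < a) :
    μ.real {ω | a ≤ X ω} ≤ Var[X; μ] / (a - ∫ ω, X ω ∂μ) ^ 2 := by
  set c := a - ∫ ω, X ω ∂μ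
  calc μ.real {ω | a ≤ X ω} ≤ μ.real {ω | c ≤ |X ω - ∫ x, X x ∂μ|} :=
        measureReal_mono fun ω (h : a ≤ X ω) => (sub_le_sub_right h _).trans (le_abs_self _)
    _ ≤ Var[X; μ] / c ^ 2 :=
        ENNReal.toReal_le_of_le_ofReal (div_nonneg (variance_nonneg _ _) (sq_nonneg _))
          (meas_ge_le_variance_div_sq hX (sub_pos.mpr ha))

theorem integral_sum_clip_le (hmeas : ∀ i, Measurable (V i))
    (hcdf : ∀ i, ∀ x : ℝ, 1 ≤ x → (μ {ω | V i ω ≤ x}).toReal = 1 - 1 / x) (hu : 1 ≤ u) :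
    ∫ ω, ∑ i, clip u (V i ω) ∂μ ≤ m * (1 + Real.log u) := by
  rw [integral_finsetSum _ fun i _ => (memLp_clip (hmeas i) hu 1).integrable le_rfl]
  calc ∑ i, ∫ ω, clip u (V i ω) ∂μ ≤ ∑ _i : Fin m, (1 + Real.log u) :=
        Finset.sum_le_sum fun i _ => integral_clip_le (hmeas i) (hcdf i) hu
    _ = m * (1 + Real.log u) := by rw [Finset.sum_const, Finset.card_fin, nsmul_eq_mul]

theorem variance_sum_clip_le (hmeas : ∀ i, Measurable (V i))
    (hindep : iIndepFun V μ)
    (hcdf : ∀ i, ∀ x : ℝ, 1 ≤ x → (μ {ω | V i ω ≤ x}).toReal = 1 - 1 / x) (hu : 1 ≤ u) :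
    Var[fun ω => ∑ i, clip u (V i ω); μ] ≤ m * (2 * u) := by
  have hX (i : Fin m) : MemLp (fun ω => clip u (V i ω)) 2 μ := memLp_clip (hmeas i) hu 2
  have hindepX : iIndepFun (fun i ω => clip u (V i ω)) μ :=
    hindep.comp (fun _ => clip u) fun _ => measurable_clip
  have hsum : (fun ω => ∑ i, clip u (V i ω)) = ∑ i, fun ω => clip u (V i ω) := by
    ext; simp
  rw [hsum, IndepFun.variance_sum (fun i _ => hX i) fun i _ j _ hij => hindepX.indepFun hij]
  calc ∑ i, Var[fun ω => clip u (V i ω); μ] ≤ ∑ _i : Fin m, 2 * u :=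
        Finset.sum_le_sum fun i _ =>
          (variance_le_expectation_sq (hX i).1).trans (integral_clip_sq_le (hmeas i) (hcdf i) hu)
    _ = m * (2 * u) := by rw [Finset.sum_const, Finset.card_fin, nsmul_eq_mul]

theorem log_twelve_lt_three : Real.log 12 < 3 := by
  rw [Real.log_lt_iff_lt_exp (by norm_num), show (3 : ℝ) = (3 : ℕ) * 1 by norm_num,
    Real.exp_nat_mul]
  calc (12 : ℝ) < 2.7 ^ 3 := by norm_num
    _ < Real.exp 1 ^ 3 :=
      pow_lt_pow_left₀ (by linarith [Real.exp_one_gt_d9]) (by norm_num) (by norm_num)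

theorem measureReal_mean_ge_le_nine_div (hm : 0 < m) (hmeas : ∀ i, Measurable (V i))
    (hindep : iIndepFun V μ)
    (hcdf : ∀ i, ∀ x : ℝ, 1 ≤ x → (μ {ω | V i ω ≤ x}).toReal = 1 - 1 / x)
    {t : ℝ} (ht0 : 0 < t) (ht : 6 * Real.log m ≤ t) :
    μ.real {ω | t ≤ (1 / (m : ℝ)) * ∑ i, V i ω} ≤ 9 / t := by
  rcases le_or_gt t 9 with ht9 | ht9
  · exact measureReal_le_one.trans ((le_div_iff₀ ht0).mpr (by linarith))
  have hm1 : (1 : ℝ) ≤ m := Nat.one_le_cast.mpr hm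
  set u := (m : ℝ) * t
  have hu : 1 ≤ u := by nlinarith
  set S : Ω → ℝ := fun ω => ∑ i, clip u (V i ω)
  have hS : MemLp S 2 μ := memLp_finsetSum _ fun i _ => memLp_clip (hmeas i) hu 2
  have hevent : μ.real {ω | t ≤ (1 / (m : ℝ)) * ∑ i, V i ω} ≤ μ.real {ω | u ≤ S ω} := by
    refine measureReal_mono fun ω (h : t ≤ _) => le_sum_clip hu ?_
    rwa [one_div_mul_eq_div, le_div_iff₀ (by positivity), mul_comm] at h
  have hES : ∫ ω, S ω ∂μ ≤ m * (1 + Real.log m + Real.log t) := by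
    rw [add_assoc, ← Real.log_mul (by positivity) ht0.ne']
    exact integral_sum_clip_le hmeas hcdf hu
  refine hevent.trans ?_
  rcases le_or_gt t 12 with ht12 | ht12
  · have hlogt : Real.log t ≤ Real.log 12 := Real.log_le_log ht0 ht12
    have hmarkov : u * μ.real {ω | u ≤ S ω} ≤ ∫ ω, S ω ∂μ :=
      mul_meas_ge_le_integral_of_nonneg
        (ae_of_all _ fun ω => Finset.sum_nonneg fun i _ => zero_le_one.trans (one_le_clip hu))
        (hS.integrable one_le_two) u
    rw [le_div_iff₀ ht0]
    nlinarith [log_twelve_lt_three, measureReal_nonneg (μ := μ) (s := {ω | u ≤ S ω})]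
  · have hlogt : Real.log t < 2 + t / 12 := by
      have := Real.log_le_sub_one_of_pos (x := t / 12) (by positivity)
      rw [Real.log_div ht0.ne' (by norm_num)] at this
      linarith [log_twelve_lt_three]
    have hES' : ∫ ω, S ω ∂μ ≤ u / 2 := by
      refine hES.trans ?_
      nlinarith
    calc μ.real {ω | u ≤ S ω} ≤ Var[S; μ] / (u - ∫ ω, S ω ∂μ) ^ 2 :=
          measureReal_ge_le_variance_div_sq_s6 hS (by linarith)
      _ ≤ m * (2 * u) / (u / 2) ^ 2 :=
          div_le_div₀ (by positivity) (variance_sum_clip_le hmeas hindep hcdf hu) (by positivity)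
            (pow_le_pow_left₀ (by positivity) (by linarith) 2)
      _ = 8 / t := by field_simp; ring
      _ ≤ 9 / t := by gcongr; norm_num

end SampleMean

theorem card_filter_mul_le {P L : ℝ} (hP : 0 < P) (hL : 0 ≤ L) (m : ℕ) :
    (((Finset.Icc 1 m).filter fun k : ℕ => (k : ℝ) * P ≤ L).card : ℝ) * P ≤ L := by
  set N := ⌊L / P⌋₊
  have hsub : ((Finset.Icc 1 m).filter fun k : ℕ => (k : ℝ) * P ≤ L) ⊆ Finset.Icc 1 N := by
    intro k hk
    rw [Finset.mem_filter, Finset.mem_Icc] at hk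
    exact Finset.mem_Icc.mpr ⟨hk.1.1, Nat.le_floor ((le_div_iff₀ hP).mpr hk.2)⟩
  calc _ ≤ (N : ℝ) * P := by
        gcongr
        exact_mod_cast (Finset.card_le_card hsub).trans_eq (Nat.card_Icc 1 N)
    _ ≤ L / P * P := by gcongr; exact Nat.floor_le (by positivity)
    _ = L := div_mul_cancel₀ L hP.ne'

theorem sum_Icc_div_le (m : ℕ) {c : ℝ} (hc : 0 ≤ c) :
    ∑ k ∈ Finset.Icc 1 m, c / k ≤ c * (1 + Real.log m) := by
  calc ∑ k ∈ Finset.Icc 1 m, c / k = c * harmonic m := by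
        simp [harmonic_eq_sum_Icc, Finset.mul_sum, div_eq_mul_inv]
    _ ≤ c * (1 + Real.log m) := by gcongr; exact harmonic_le_one_add_log m

theorem item_type_bundling_revenue_general
    {Ω : Type*} [MeasurableSpace Ω] (μ : Measure Ω) [IsProbabilityMeasure μ]
    (m : ℕ) (V : Fin m → Ω → ℝ)
    (hmeas : ∀ i, Measurable (V i))
    (hindep : ProbabilityTheory.iIndepFun V μ)
    (hcdf : ∀ i, ∀ x : ℝ, 1 ≤ x → (μ {ω | V i ω ≤ x}).toReal = 1 - 1 / x)
    (Pstar : ℝ) :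
    (1 / (m : ℝ)) * ∑ k ∈ Finset.Icc 1 m,
        Pstar * (μ {ω | (k : ℝ) * Pstar ≤ (1 / (m : ℝ)) * ∑ i, V i ω}).toReal
      ≤ (1 / (m : ℝ)) * (9 * (1 + Real.log m) + 6 * Real.log m) := by
  rcases le_or_gt Pstar 0 with hP | hP
  · refine (mul_nonpos_of_nonneg_of_nonpos (by positivity) (Finset.sum_nonpos fun k _ =>
      mul_nonpos_of_nonpos_of_nonneg hP ENNReal.toReal_nonneg)).trans (by positivity)
  refine mul_le_mul_of_nonneg_left ?_ (by positivity)
  set L := 6 * Real.log m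
  have hterm (k : ℕ) (hk : k ∈ Finset.Icc 1 m) :
      Pstar * (μ {ω | (k : ℝ) * Pstar ≤ (1 / (m : ℝ)) * ∑ i, V i ω}).toReal
        ≤ if (k : ℝ) * Pstar ≤ L then Pstar else 9 / k := by
    rw [Finset.mem_Icc] at hk
    have hk0 : (0 : ℝ) < k := by exact_mod_cast hk.1
    split_ifs with hkL
    · exact mul_le_of_le_one_right hP.le measureReal_le_one
    · calc _ ≤ Pstar * (9 / (k * Pstar)) :=
            mul_le_mul_of_nonneg_left (measureReal_mean_ge_le_nine_div (by omega) hmeas hindep hcdf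
              (by positivity) (le_of_not_ge hkL)) hP.le
        _ = 9 / k := by field_simp
  calc _ ≤ ∑ k ∈ Finset.Icc 1 m, if (k : ℝ) * Pstar ≤ L then Pstar else 9 / k :=
        Finset.sum_le_sum hterm
    _ = (∑ k ∈ Finset.Icc 1 m with ((k : ℕ) : ℝ) * Pstar ≤ L, Pstar)
          + ∑ k ∈ Finset.Icc 1 m with ¬((k : ℕ) : ℝ) * Pstar ≤ L, (9 : ℝ) / k :=
        Finset.sum_ite _ _
    _ ≤ L + 9 * (1 + Real.log m) := by
        gcongr
        · rw [Finset.sum_const, nsmul_eq_mul]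
          exact card_filter_mul_le hP (by positivity) m
        · exact (Finset.sum_le_sum_of_subset_of_nonneg (Finset.filter_subset _ _)
            fun _ _ _ => by positivity).trans (sum_Icc_div_le m (by norm_num : (0 : ℝ) ≤ 9))
    _ = 9 * (1 + Real.log m) + 6 * Real.log m := by ring

/-- Claim 2 (item-type bundling revenue in Example 1): with `m ≥ 2` i.i.d. equal-revenue
variables `V_1, …, V_m` and the data provider revealing the group index `k` (each with
probability `1/m`), for any bundle price `P* ≥ 0` the total bundling revenue
`(1/m) Σ_{k=1}^m P* · P[(1/m) Σ_i V_i ≥ k P*]` is at most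
`(1/m)(9(1 + log m) + 6 log m)`. -/
theorem item_type_bundling_revenue
    {Ω : Type*} [MeasurableSpace Ω] (μ : Measure Ω) [IsProbabilityMeasure μ]
    (m : ℕ) (hm : 2 ≤ m) (V : Fin m → Ω → ℝ)
    (hmeas : ∀ i, Measurable (V i))
    (hindep : ProbabilityTheory.iIndepFun V μ)
    (hsupp : ∀ i, ∀ᵐ ω ∂μ, 1 ≤ V i ω)
    (hcdf : ∀ i, ∀ x : ℝ, 1 ≤ x → (μ {ω | V i ω ≤ x}).toReal = 1 - 1 / x)
    (Pstar : ℝ) (hP : 0 ≤ Pstar) :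
    (1 / (m : ℝ)) * ∑ k ∈ Finset.Icc 1 m,
        Pstar * (μ {ω | (k : ℝ) * Pstar ≤ (1 / (m : ℝ)) * ∑ i, V i ω}).toReal
      ≤ (1 / (m : ℝ)) * (9 * (1 + Real.log m) + 6 * Real.log m) :=
  item_type_bundling_revenue_general μ m V hmeas hindep hcdf Pstar
end

section
/- Let m ≥ 2 and let V_1,...,V_m be i.i.d. ER random variables. For each k ∈ [m], posting price (log m)/(2k) to a bidder with average value (1/m)Σ_i V_i/k is accepted with probability at least 1/2, and hence the item-type partition mechanism that posts price (log m)/(2k) when the item is in group k obtains total expected revenue at least (1/m)·Σ_{k=1}^m (log m)/(4k) ≥ (log m · log m)/(4m) (up to constants Ω(log²n/√n) with n = m²). -/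
/-!
Clipping an equal-revenue variable to `[1, m]` gives a variable `W` with `P(W > t) = 1/t` on
`(1, m)`, so the layer-cake formula yields `E W = 1 + log m` and `E W² = 2m - 1`. The average
of `m` independent copies thus has mean `1 + log m` and variance at most `2`; since it lies below
the average of the `V i`, Chebyshev's inequality with deviation `1 + log m / 2 ≥ 2` puts the
latter above `log m / 2` with probability at least `1/2` when `log m > 2`, while for
`log m ≤ 2` this holds almost surely because every `V i ≥ 1`. Dividing price and value by `k`
does not change the event, and `∑_{k ≤ m} 1/k ≥ log m` gives the revenue bound.
-/

open MeasureTheory ProbabilityTheory Set Real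

lemma lt_min_max_one_iff {x B t : ℝ} (ht : 1 ≤ t) (htB : t < B) :
    t < min (max x 1) B ↔ t < x := by
  simp only [lt_min_iff, lt_max_iff, htB, and_true, or_iff_left_iff_imp]
  intro h
  linarith

section

variable {Ω : Type*} [MeasurableSpace Ω] {μ : Measure Ω}

lemma variance_mean_le {ι : Type*} [Fintype ι] {X : ι → Ω → ℝ} (hX : ∀ i, MemLp (X i) 2 μ)
    (hindep : Pairwise fun i j => X i ⟂ᵢ[μ] X j) {v : ℝ} (hv : ∀ i, variance (X i) μ ≤ v) :
    variance (fun ω => 1 / (Fintype.card ι : ℝ) * ∑ i, X i ω) μ ≤ v / Fintype.card ι := by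
  have hsum : variance (fun ω => ∑ i, X i ω) μ = ∑ i, variance (X i) μ := by
    rw [← Finset.sum_fn]
    exact IndepFun.variance_sum (s := Finset.univ) (fun i _ => hX i)
      fun i _ j _ hij => hindep hij
  rw [variance_const_mul, hsum]
  calc (1 / (Fintype.card ι : ℝ)) ^ 2 * ∑ i, variance (X i) μ
      ≤ (1 / (Fintype.card ι : ℝ)) ^ 2 * (Fintype.card ι * v) := by
        gcongr
        simpa using Finset.sum_le_sum fun i (_ : i ∈ Finset.univ) => hv i
    _ = v / Fintype.card ι := by
        rcases eq_or_ne (Fintype.card ι : ℝ) 0 with h | h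
        · simp [h]
        · field_simp

variable [IsProbabilityMeasure μ]

lemma integral_eq_one_add_intervalIntegral_of_tail {g : Ω → ℝ} (hg : Measurable g) {B : ℝ}
    (hB : 1 ≤ B) (hg1 : ∀ ω, 1 ≤ g ω) (hgB : ∀ ω, g ω ≤ B) {f : ℝ → ℝ}
    (hf : ∀ t ∈ Ioo 1 B, μ.real {ω | t < g ω} = f t) :
    ∫ ω, g ω ∂μ = 1 + ∫ t in 1..B, f t := by
  set tail : ℝ → ℝ := fun t => μ.real {ω | t < g ω}
  have htail_anti : Antitone tail := fun s t hst =>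
    measureReal_mono fun ω hω => lt_of_le_of_lt hst hω
  have hint : Integrable g μ :=
    Integrable.of_bound hg.aestronglyMeasurable B
      (ae_of_all _ fun ω => by rw [norm_of_nonneg (zero_le_one.trans (hg1 ω))]; exact hgB ω)
  have hlow : ∫ t in (0 : ℝ)..1, tail t = 1 := by
    rw [intervalIntegral.integral_congr_Ioo_of_le zero_le_one (g := fun _ => 1)]
    · simp
    intro t ht
    have : {ω | t < g ω} = univ := eq_univ_of_forall fun ω => ht.2.trans_le (hg1 ω)
    simp [tail, this]
  calc ∫ ω, g ω ∂μ = ∫ t in Ioi 0, tail t :=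
        hint.integral_eq_integral_meas_lt (ae_of_all _ fun ω => zero_le_one.trans (hg1 ω))
    _ = ∫ t in Ioc 0 B, tail t := by
        refine setIntegral_eq_of_subset_of_forall_sdiff_eq_zero measurableSet_Ioi
          Ioc_subset_Ioi_self fun t ht => ?_
        have : {ω | t < g ω} = ∅ := eq_empty_of_forall_notMem fun ω hω =>
          ht.2 ⟨ht.1, (lt_of_lt_of_le hω (hgB ω)).le⟩ |>.elim
        simp [tail, this]
    _ = (∫ t in (0 : ℝ)..1, tail t) + ∫ t in 1..B, tail t := by
        rw [intervalIntegral.integral_add_adjacent_intervals htail_anti.intervalIntegrable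
          htail_anti.intervalIntegrable, intervalIntegral.integral_of_le (by linarith)]
    _ = 1 + ∫ t in 1..B, f t := by
        rw [hlow, intervalIntegral.integral_congr_Ioo_of_le hB hf]

section TruncatedEqualRevenue

variable {g : Ω → ℝ} {B : ℝ} (hg : Measurable g) (hB : 1 ≤ B) (hg1 : ∀ ω, 1 ≤ g ω)
  (hgB : ∀ ω, g ω ≤ B) (htail : ∀ t ∈ Ioo 1 B, μ.real {ω | t < g ω} = t⁻¹)
include hg hB hg1 hgB htail

lemma integral_eq_one_add_log_of_tail_inv : ∫ ω, g ω ∂μ = 1 + log B := by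
  rw [integral_eq_one_add_intervalIntegral_of_tail hg hB hg1 hgB htail,
    integral_inv_of_pos one_pos (by linarith), div_one]

lemma integral_sq_eq_of_tail_inv : ∫ ω, g ω ^ 2 ∂μ = 2 * B - 1 := by
  have hB0 : 0 < B := by linarith
  have hsq_tail : ∀ t ∈ Ioo 1 (B ^ 2), μ.real {ω | t < g ω ^ 2} = (√t)⁻¹ := by
    intro t ht
    have hset : {ω | t < g ω ^ 2} = {ω | √t < g ω} := by
      ext ω
      exact (Real.sqrt_lt' (zero_lt_one.trans_le (hg1 ω))).symm
    rw [hset, htail]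
    constructor
    · exact Real.lt_sqrt_of_sq_lt (by simpa using ht.1)
    · exact (Real.sqrt_lt' hB0).2 ht.2
  rw [integral_eq_one_add_intervalIntegral_of_tail (hg.pow_const 2) (one_le_pow₀ hB)
    (fun ω => one_le_pow₀ (hg1 ω)) (fun ω => pow_le_pow_left₀ (zero_le_one.trans (hg1 ω)) (hgB ω) 2)
    hsq_tail]
  have hpos : ∀ t ∈ uIcc 1 (B ^ 2), 0 < t := fun t ht => by
    rw [uIcc_of_le (one_le_pow₀ hB)] at ht
    linarith [ht.1]
  have hderiv : ∀ t ∈ uIcc 1 (B ^ 2), HasDerivAt (fun t => 2 * √t) (√t)⁻¹ t := fun t ht => by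
    refine ((Real.hasDerivAt_sqrt (hpos t ht).ne').const_mul 2).congr_deriv ?_
    have := Real.sqrt_pos.2 (hpos t ht)
    field_simp
  have hcont : ContinuousOn (fun t : ℝ => (√t)⁻¹) (uIcc 1 (B ^ 2)) :=
    Real.continuous_sqrt.continuousOn.inv₀ fun t ht => (Real.sqrt_pos.2 (hpos t ht)).ne'
  rw [intervalIntegral.integral_eq_sub_of_hasDerivAt hderiv hcont.intervalIntegrable,
    Real.sqrt_sq hB0.le, Real.sqrt_one]
  ring

lemma variance_le_of_tail_inv : variance g μ ≤ 2 * B := by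
  calc variance g μ ≤ ∫ ω, g ω ^ 2 ∂μ := variance_le_expectation_sq hg.aestronglyMeasurable
    _ ≤ 2 * B := by linarith [integral_sq_eq_of_tail_inv hg hB hg1 hgB htail]

end TruncatedEqualRevenue

lemma measureReal_lt_eq_inv_of_cdf {X : Ω → ℝ} (hX : Measurable X)
    (hcdf : ∀ x : ℝ, 1 ≤ x → μ.real {ω | X ω ≤ x} = 1 - 1 / x) {t : ℝ} (ht : 1 ≤ t) :
    μ.real {ω | t < X ω} = t⁻¹ := by
  have hcompl : {ω | t < X ω} = {ω | X ω ≤ t}ᶜ := by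
    ext ω
    simp
  rw [hcompl, probReal_compl_eq_one_sub (measurableSet_le hX measurable_const), hcdf t ht]
  ring

lemma one_sub_variance_div_sq_le_measureReal {T S : Ω → ℝ} (hT : MemLp T 2 μ)
    (hTS : ∀ᵐ ω ∂μ, T ω ≤ S ω) {a c : ℝ} (hc : 0 < c) (hac : a + c ≤ μ[T]) :
    1 - variance T μ / c ^ 2 ≤ μ.real {ω | a ≤ S ω} := by
  have hbad : μ.real {ω | S ω < a} ≤ variance T μ / c ^ 2 := by
    refine ENNReal.toReal_le_of_le_ofReal (div_nonneg (variance_nonneg _ _) (sq_nonneg _))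
      ((measure_mono_ae ?_).trans (meas_ge_le_variance_div_sq hT hc))
    filter_upwards [hTS] with ω hω hSa
    have hSa : S ω < a := hSa
    exact le_abs.2 (Or.inr (by linarith))
  have hcover : μ.real univ ≤ μ.real {ω | a ≤ S ω} + μ.real {ω | S ω < a} :=
    (measureReal_mono fun ω _ => le_or_gt a (S ω)).trans (measureReal_union_le _ _)
  rw [probReal_univ] at hcover
  linarith

lemma measureReal_le_mean_eq_one_of_le_one {m : ℕ} (hm : 0 < m) {V : Fin m → Ω → ℝ}
    (hsupp : ∀ i, ∀ᵐ ω ∂μ, 1 ≤ V i ω) {a : ℝ} (ha : a ≤ 1) :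
    μ.real {ω | a ≤ 1 / m * ∑ i, V i ω} = 1 := by
  have hae : ∀ᵐ ω ∂μ, a ≤ 1 / m * ∑ i, V i ω := by
    filter_upwards [ae_all_iff.2 hsupp] with ω hω
    have hsum : (m : ℝ) ≤ ∑ i, V i ω := by
      simpa using Finset.sum_le_sum fun i (_ : i ∈ Finset.univ) => hω i
    calc a ≤ 1 / m * m := by rwa [one_div_mul_cancel (by positivity)]
      _ ≤ 1 / m * ∑ i, V i ω := by gcongr
  rw [measureReal_congr (Filter.eventuallyEq_univ.2 hae), probReal_univ]

lemma half_le_measureReal_half_log_le_mean {m : ℕ} (hm : 0 < m) {V : Fin m → Ω → ℝ}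
    (hmeas : ∀ i, Measurable (V i)) (hindep : iIndepFun V μ) (hsupp : ∀ i, ∀ᵐ ω ∂μ, 1 ≤ V i ω)
    (htail : ∀ i, ∀ t : ℝ, 1 ≤ t → μ.real {ω | t < V i ω} = t⁻¹) :
    1 / 2 ≤ μ.real {ω | log m / 2 ≤ 1 / m * ∑ i, V i ω} := by
  have hm1 : (1 : ℝ) ≤ m := by exact_mod_cast hm
  rcases le_or_gt (log m) 2 with hlog | hlog
  · rw [measureReal_le_mean_eq_one_of_le_one hm hsupp (by linarith)]
    norm_num
  set W : Fin m → Ω → ℝ := fun i ω => min (max (V i ω) 1) m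
  have hclip : Measurable fun x : ℝ => min (max x 1) (m : ℝ) :=
    (measurable_id.max measurable_const).min measurable_const
  have hWmeas : ∀ i, Measurable (W i) := fun i => hclip.comp (hmeas i)
  have hW1 : ∀ i ω, 1 ≤ W i ω := fun i ω => le_min (le_max_right _ _) hm1
  have hWm : ∀ i ω, W i ω ≤ m := fun i ω => min_le_right _ _
  have hWtail : ∀ i, ∀ t ∈ Ioo 1 (m : ℝ), μ.real {ω | t < W i ω} = t⁻¹ := fun i t ht => by
    simp only [W, lt_min_max_one_iff ht.1.le ht.2]
    exact htail i t ht.1.le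
  have hWL2 : ∀ i, MemLp (W i) 2 μ := fun i =>
    memLp_of_bounded (ae_of_all _ fun ω => ⟨hW1 i ω, hWm i ω⟩) (hWmeas i).aestronglyMeasurable 2
  have hmean : μ[fun ω => 1 / m * ∑ i, W i ω] = 1 + log m := by
    rw [integral_const_mul, integral_finsetSum _ fun i _ => (hWL2 i).integrable one_le_two]
    simp only [integral_eq_one_add_log_of_tail_inv (hWmeas _) hm1 (hW1 _) (hWm _) (hWtail _),
      Finset.sum_const, Finset.card_univ, Fintype.card_fin, nsmul_eq_mul]
    field_simp
  have hvar : variance (fun ω => 1 / m * ∑ i, W i ω) μ ≤ 2 := by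
    have hindepW : iIndepFun W μ := hindep.comp _ fun _ => hclip
    have := variance_mean_le hWL2 (fun i j hij => hindepW.indepFun hij)
      fun i => variance_le_of_tail_inv (hWmeas i) hm1 (hW1 i) (hWm i) (hWtail i)
    rwa [Fintype.card_fin, mul_div_cancel_right₀ _ (by positivity)] at this
  have hWV : ∀ᵐ ω ∂μ, 1 / m * ∑ i, W i ω ≤ 1 / m * ∑ i, V i ω := by
    filter_upwards [ae_all_iff.2 hsupp] with ω hω
    gcongr with i
    exact min_le_of_left_le (max_le le_rfl (hω i))
  have hcheb := one_sub_variance_div_sq_le_measureReal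
    ((memLp_finsetSum _ fun i _ => hWL2 i).const_mul (1 / m)) hWV
    (a := log m / 2) (c := 1 + log m / 2) (by positivity) (by rw [hmean]; linarith)
  have hratio : variance (fun ω => 1 / m * ∑ i, W i ω) μ / (1 + log m / 2) ^ 2 ≤ 1 / 2 := by
    rw [div_le_iff₀ (by positivity)]
    nlinarith
  linarith

end

lemma log_le_sum_Icc_inv (n : ℕ) : log n ≤ ∑ k ∈ Finset.Icc 1 n, (k : ℝ)⁻¹ := by
  simpa [harmonic_eq_sum_Icc] using log_le_harmonic_floor n n.cast_nonneg

lemma div_two_mul_le_mul_sum_div_iff {ι : Type*} (s : Finset ι) (x : ι → ℝ) {a c k : ℝ}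
    (hk : 0 < k) : a / (2 * k) ≤ c * ∑ i ∈ s, x i / k ↔ a / 2 ≤ c * ∑ i ∈ s, x i := by
  rw [← Finset.sum_div, ← mul_div_assoc, ← div_div, div_le_div_iff_of_pos_right hk]

/-- Claim 3 (item-type partitioning in Example 1): with `m ≥ 2` i.i.d. equal-revenue
variables, posting price `(log m)/(2k)` to a bidder with average value `(1/m) Σ_i V_i/k`
is accepted with probability at least `1/2` for each group `k`, and the item-type
partition mechanism posting these prices obtains total expected revenue at least
`(log m)²/(4m)`. -/
theorem item_type_partition_revenue
    {Ω : Type*} [MeasurableSpace Ω] (μ : Measure Ω) [IsProbabilityMeasure μ]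
    (m : ℕ) (hm : 2 ≤ m) (V : Fin m → Ω → ℝ)
    (hmeas : ∀ i, Measurable (V i))
    (hindep : ProbabilityTheory.iIndepFun V μ)
    (hsupp : ∀ i, ∀ᵐ ω ∂μ, 1 ≤ V i ω)
    (hcdf : ∀ i, ∀ x : ℝ, 1 ≤ x → (μ {ω | V i ω ≤ x}).toReal = 1 - 1 / x) :
    (∀ k ∈ Finset.Icc 1 m,
        (1 : ℝ) / 2 ≤
          (μ {ω | Real.log m / (2 * (k : ℝ)) ≤
              (1 / (m : ℝ)) * ∑ i, V i ω / (k : ℝ)}).toReal) ∧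
    (Real.log m) ^ 2 / (4 * (m : ℝ)) ≤
      (1 / (m : ℝ)) * ∑ k ∈ Finset.Icc 1 m,
        (Real.log m / (2 * (k : ℝ))) *
          (μ {ω | Real.log m / (2 * (k : ℝ)) ≤
              (1 / (m : ℝ)) * ∑ i, V i ω / (k : ℝ)}).toReal := by
  have hconc := half_le_measureReal_half_log_le_mean (μ := μ) (by omega) hmeas hindep hsupp
    fun i _ ht => measureReal_lt_eq_inv_of_cdf (hmeas i) (hcdf i) ht
  have hprob : ∀ k ∈ Finset.Icc 1 m, (1 : ℝ) / 2 ≤ (μ {ω | log m / (2 * (k : ℝ)) ≤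
      1 / (m : ℝ) * ∑ i, V i ω / (k : ℝ)}).toReal := fun k hk => by
    have hk : (0 : ℝ) < k := by exact_mod_cast (Finset.mem_Icc.1 hk).1
    simpa only [div_two_mul_le_mul_sum_div_iff _ _ hk, measureReal_def] using hconc
  refine ⟨hprob, ?_⟩
  have hprices : ∑ k ∈ Finset.Icc 1 m, log m / (2 * k) * (1 / 2)
      = log m / 4 * ∑ k ∈ Finset.Icc 1 m, (k : ℝ)⁻¹ := by
    rw [Finset.mul_sum]
    exact Finset.sum_congr rfl fun k _ => by ring
  calc log m ^ 2 / (4 * m) = 1 / m * (log m / 4 * log m) := by ring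
    _ ≤ 1 / m * ∑ k ∈ Finset.Icc 1 m, log m / (2 * k) * (1 / 2) := by
        rw [hprices]
        gcongr
        exact log_le_sum_Icc_inv m
    _ ≤ _ := by
        gcongr with k hk
        exact hprob k hk
end
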